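/- arXiv:1308.1899 — 2 statements merged into one kernel-verified Lean document; each statement's English description precedes it below -/
import Mathlib

section
/- If t ≥ s·(log s)^{2α} for reals s ≥ 2, t and α > 4, and a = ⌈log s⌉, then s^{a+1}·(log s)^{aα} / t^{a-2} → 0 as s → ∞. -/
open Filter

theorem property_one_estimate (α : ℝ) (hα : 4 < α) (t : ℝ → ℝ)
    (ht : ∀ s : ℝ, 2 ≤ s → s * (Real.log s) ^ (2 * α) ≤ t s) :
    Tendsto (fun s : ℝ =>
        s ^ (⌈Real.log s⌉₊ + 1) * (Real.log s) ^ ((⌈Real.log s⌉₊ : ℝ) * α) /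
          (t s) ^ ((⌈Real.log s⌉₊ : ℤ) - 2))
      atTop (nhds 0) := by
  have hα0 : 0 < α := by linarith
  set g : ℝ → ℝ := fun s => 3 * Real.log s + 4 * α * Real.log (Real.log s)
      - α * Real.log s * Real.log (Real.log s) with hg
  have hloglog : Tendsto (fun s => Real.log (Real.log s)) atTop atTop :=
    Real.tendsto_log_atTop.comp Real.tendsto_log_atTop
  -- g → -∞
  have hgbot : Tendsto g atTop atBot := by
    apply tendsto_atBot_mono' atTop ?_
      (tendsto_neg_atTop_atBot.comp Real.tendsto_log_atTop)
    filter_upwards [hloglog.eventually_ge_atTop ((4 + 4 * α) / α),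
      Real.tendsto_log_atTop.eventually_ge_atTop 1] with s h1 h2
    have hLL : Real.log (Real.log s) ≤ Real.log s :=
      (Real.log_le_sub_one_of_pos (by linarith)).trans (by linarith)
    have h1' : 4 + 4 * α ≤ α * Real.log (Real.log s) := by
      rw [div_le_iff₀ hα0] at h1; linarith [h1]
    simp only [hg, Function.comp]
    nlinarith [mul_le_mul_of_nonneg_left hLL (by positivity : (0:ℝ) ≤ 4 * α),
      mul_le_mul_of_nonneg_left h1' (by linarith : (0:ℝ) ≤ Real.log s)]
  -- squeeze
  have hexp : Tendsto (fun s => Real.exp (g s)) atTop (nhds 0) :=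
    Real.tendsto_exp_atBot.comp hgbot
  apply squeeze_zero' ?_ ?_ hexp
  · -- eventually nonneg
    filter_upwards [eventually_ge_atTop (Real.exp 5)] with s hs
    have hs0 : (1:ℝ) < s := lt_of_lt_of_le (by nlinarith [Real.exp_one_gt_d9, Real.exp_le_exp.2 (by norm_num : (1:ℝ) ≤ 5)]) hs
    have hL : (5:ℝ) ≤ Real.log s := (Real.le_log_iff_exp_le (by linarith)).2 hs
    have hL0 : (0:ℝ) < Real.log s := by linarith
    have hts : 0 < t s := lt_of_lt_of_le (by positivity) (ht s (by nlinarith [Real.exp_le_exp.2 (by norm_num : (1:ℝ) ≤ 5), Real.add_one_le_exp (1:ℝ)]))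
    positivity
  · -- eventually ≤ exp (g s)
    filter_upwards [eventually_ge_atTop (Real.exp 5)] with s hs
    have hs0 : (1:ℝ) < s := lt_of_lt_of_le (by nlinarith [Real.add_one_le_exp (5:ℝ)]) hs
    have hs0' : (0:ℝ) < s := by linarith
    have hL : (5:ℝ) ≤ Real.log s := (Real.le_log_iff_exp_le (by linarith)).2 hs
    have hL0 : (0:ℝ) < Real.log s := by linarith
    have hL1 : (1:ℝ) < Real.log s := by linarith
    have hlogL0 : (0:ℝ) < Real.log (Real.log s) := Real.log_pos hL1
    set a := ⌈Real.log s⌉₊ with ha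
    have haL : Real.log s ≤ (a:ℝ) := Nat.le_ceil _
    have ha5 : 5 ≤ a := by
      have : (4:ℕ) < a := Nat.lt_ceil.2 (by exact_mod_cast by linarith)
      omega
    have hs2 : (2:ℝ) ≤ s := le_trans (by nlinarith [Real.add_one_le_exp (5:ℝ)]) hs
    have ht' : s * Real.log s ^ (2 * α) ≤ t s := ht s hs2
    have hbase : (0:ℝ) < s * Real.log s ^ (2 * α) := by positivity
    have hts : 0 < t s := lt_of_lt_of_le hbase ht'
    -- rewrite zpow as npow
    have hz : (t s) ^ ((a : ℤ) - 2) = (t s) ^ (a - 2) := by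
      rw [show (a : ℤ) - 2 = ((a - 2 : ℕ) : ℤ) by omega, zpow_natCast]
    rw [hz]
    have hDle : (s * Real.log s ^ (2 * α)) ^ (a - 2) ≤ (t s) ^ (a - 2) :=
      pow_le_pow_left₀ (le_of_lt hbase) ht' _
    have step1 : s ^ (a + 1) * Real.log s ^ ((a : ℝ) * α) / (t s) ^ (a - 2)
        ≤ s ^ (a + 1) * Real.log s ^ ((a : ℝ) * α) / (s * Real.log s ^ (2 * α)) ^ (a - 2) := by
      apply div_le_div_of_nonneg_left (by positivity) (by positivity) hDle
    refine step1.trans ?_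
    -- convert to exponentials
    have e1 : s ^ (a + 1) = Real.exp (Real.log s * (a + 1)) := by
      rw [← Real.rpow_natCast s (a + 1), Real.rpow_def_of_pos hs0']
      push_cast; ring_nf
    have e2 : Real.log s ^ ((a : ℝ) * α) = Real.exp (Real.log (Real.log s) * ((a : ℝ) * α)) := by
      rw [Real.rpow_def_of_pos hL0]
    have e3 : (s * Real.log s ^ (2 * α)) ^ (a - 2)
        = Real.exp ((Real.log s + 2 * α * Real.log (Real.log s)) * (a - 2 : ℕ)) := by
      rw [← Real.rpow_natCast _ (a - 2), Real.rpow_def_of_pos hbase,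
        Real.log_mul (ne_of_gt hs0') (by positivity), Real.log_rpow hL0]
    rw [e1, e2, e3, ← Real.exp_add, ← Real.exp_sub, Real.exp_le_exp]
    have hc : ((a - 2 : ℕ) : ℝ) = (a : ℝ) - 2 := by
      push_cast [Nat.cast_sub (by omega : 2 ≤ a)]; ring
    rw [hc]
    simp only [hg]
    nlinarith [mul_le_mul_of_nonneg_left haL (by positivity : (0:ℝ) ≤ α * Real.log (Real.log s))]
end

section
/- Let p = (log t - α log log s)/t with t ≥ s(log s)^{2α}, s ≤ t ≤ s², α > 4, and s sufficiently large. Then 0 ≤ sp ≤ 1, sp → 0, and st(1-p)^t / (s(log s)^α) → 1 as s → ∞. -/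
open Filter

theorem first_round_expectation (α : ℝ) (hα : 4 < α) (t : ℝ → ℝ)
    (ht : ∀ᶠ s : ℝ in atTop, s * (Real.log s) ^ (2 * α) ≤ t s ∧ s ≤ t s ∧ t s ≤ s ^ 2)
    (p : ℝ → ℝ)
    (hp : ∀ s : ℝ, p s = (Real.log (t s) - α * Real.log (Real.log s)) / t s) :
    (∀ᶠ s : ℝ in atTop, 0 ≤ s * p s ∧ s * p s ≤ 1) ∧
      Tendsto (fun s : ℝ => s * p s) atTop (nhds 0) ∧
      Tendsto (fun s : ℝ =>
          s * t s * (1 - p s) ^ (t s) / (s * (Real.log s) ^ α))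
        atTop (nhds 1) := by
  have hα0 : (0:ℝ) < α := by linarith
  have htt : Tendsto t atTop atTop :=
    tendsto_atTop_mono' atTop (ht.mono fun s h => h.2.1) tendsto_id
  have hlog : ∀ c : ℝ, 0 < c → ∀ᶠ x : ℝ in atTop, Real.log x ≤ c * x := by
    intro c hc
    filter_upwards [Real.isLittleO_log_id_atTop.def hc, eventually_ge_atTop (0:ℝ)]
      with x hx hx0
    calc Real.log x ≤ |Real.log x| := le_abs_self _
      _ ≤ c * |x| := by simpa [Real.norm_eq_abs] using hx
      _ = c * x := by rw [abs_of_nonneg hx0]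
  have hαll : ∀ᶠ s : ℝ in atTop, α * Real.log (Real.log s) ≤ Real.log s :=
    Real.tendsto_log_atTop.eventually <| by
      filter_upwards [hlog (1/α) (by positivity)] with x hx
      have : α * Real.log x ≤ α * ((1/α) * x) :=
        mul_le_mul_of_nonneg_left hx hα0.le
      calc α * Real.log x ≤ α * ((1/α) * x) := this
        _ = x := by field_simp
  have hth : ∀ᶠ s : ℝ in atTop, Real.log (t s) ≤ (1/2) * t s :=
    htt.eventually (hlog (1/2) one_half_pos)
  have key : ∀ᶠ s : ℝ in atTop,
      (0 ≤ s * p s ∧ s * p s ≤ 2 * Real.log s ^ (1 - 2*α)) ∧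
      (s * t s * (1 - p s) ^ (t s) / (s * Real.log s ^ α)
        = Real.exp (Real.log (t s) + Real.log (1 - p s) * t s
            - α * Real.log (Real.log s)) ∧
       Real.log (t s) + Real.log (1 - p s) * t s - α * Real.log (Real.log s) ≤ 0 ∧
       -(2 * Real.log (t s) ^ 2 / t s)
         ≤ Real.log (t s) + Real.log (1 - p s) * t s - α * Real.log (Real.log s)) := by
    filter_upwards [ht, hαll, hth, eventually_ge_atTop (3:ℝ)] with s h1 h2 h3 hs3
    obtain ⟨hta, htb, htc⟩ := h1
    set L := Real.log s with hLdef
    set q := Real.log (t s) - α * Real.log L with hqdef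
    have hs0 : (0:ℝ) < s := by linarith
    have hL1 : (1:ℝ) ≤ L := by
      rw [hLdef, Real.le_log_iff_exp_le hs0]
      have := Real.exp_one_lt_d9
      linarith
    have hL0 : (0:ℝ) < L := by linarith
    have htpos : (0:ℝ) < t s := by linarith
    have hlogst : Real.log s ≤ Real.log (t s) := Real.log_le_log hs0 htb
    have hlt1 : (1:ℝ) ≤ Real.log (t s) := le_trans hL1 hlogst
    have hlL0 : (0:ℝ) ≤ Real.log L := Real.log_nonneg hL1
    have hq0 : (0:ℝ) ≤ q := by
      rw [hqdef]
      have : α * Real.log L ≤ L := h2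
      linarith
    have hq_le : q ≤ Real.log (t s) := by
      rw [hqdef]
      nlinarith
    have hq2L : q ≤ 2 * L := by
      have : Real.log (t s) ≤ Real.log (s ^ 2) := Real.log_le_log htpos htc
      rw [Real.log_pow] at this
      push_cast at this
      rw [hqdef]
      nlinarith
    have hp_eq : p s = q / t s := hp s
    have hp0 : (0:ℝ) ≤ p s := by
      rw [hp_eq]; exact div_nonneg hq0 htpos.le
    have hp_half : p s ≤ 1/2 := by
      rw [hp_eq, div_le_iff₀ htpos]
      nlinarith
    have h1mp : (0:ℝ) < 1 - p s := by linarith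
    have hLpow : (0:ℝ) < L ^ (2*α) := Real.rpow_pos_of_pos hL0 _
    have hpt : p s * t s = q := by
      rw [hp_eq]; field_simp
    have hpq2 : p s ^ 2 * t s = q ^ 2 / t s := by
      rw [hp_eq]; field_simp
    constructor
    · constructor
      · exact mul_nonneg hs0.le hp0
      · calc s * p s = (s * q) / t s := by rw [hp_eq]; ring
          _ ≤ (s * q) / (s * L ^ (2*α)) :=
              div_le_div_of_nonneg_left (mul_nonneg hs0.le hq0)
                (mul_pos hs0 hLpow) hta
          _ = q / L ^ (2*α) := by rw [mul_div_mul_left _ _ (ne_of_gt hs0)]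
          _ ≤ (2 * L) / L ^ (2*α) := by gcongr
          _ = 2 * L ^ ((1:ℝ) - 2*α) := by
              rw [Real.rpow_sub hL0, Real.rpow_one]; ring
    · have hpt_ne : t s ≠ 0 := ne_of_gt htpos
      refine ⟨?_, ?_, ?_⟩
      · have hcancel : s * t s * (1 - p s) ^ (t s) / (s * L ^ α)
            = t s * (1 - p s) ^ (t s) / L ^ α := by
          rw [mul_assoc, mul_div_mul_left _ _ (ne_of_gt hs0)]
        rw [hcancel, Real.rpow_def_of_pos h1mp, Real.rpow_def_of_pos hL0]
        rw [← Real.exp_log htpos, ← Real.exp_add, ← Real.exp_sub]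
        congr 1
        rw [Real.exp_log htpos]
        ring
      · have hlog1 : Real.log (1 - p s) ≤ -(p s) :=
          le_trans (Real.log_le_sub_one_of_pos h1mp) (by linarith)
        have := mul_le_mul_of_nonneg_right hlog1 htpos.le
        nlinarith
      · have h6 : Real.log (1 - p s)⁻¹ ≤ (1 - p s)⁻¹ - 1 :=
          Real.log_le_sub_one_of_pos (inv_pos.2 h1mp)
        have h7 : (1 - p s)⁻¹ ≤ 1 + p s + 2 * p s ^ 2 := by
          rw [inv_eq_one_div, div_le_iff₀ h1mp]
          nlinarith
        have hlow : -(p s + 2 * p s ^ 2) ≤ Real.log (1 - p s) := by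
          have h5 : Real.log (1 - p s) = - Real.log (1 - p s)⁻¹ := by
            rw [Real.log_inv]; ring
          rw [h5]; linarith
        have hmul := mul_le_mul_of_nonneg_right hlow htpos.le
        have e1 : -(p s + 2 * p s ^ 2) * t s = -q - 2 * (q ^ 2 / t s) := by
          have e0 : -(p s + 2 * p s ^ 2) * t s
              = -(p s * t s) - 2 * (p s ^ 2 * t s) := by ring
          rw [e0, hpt, hpq2]
        rw [e1] at hmul
        have hq2 : q ^ 2 ≤ Real.log (t s) ^ 2 := pow_le_pow_left₀ hq0 hq_le 2
        have hdiv : q ^ 2 / t s ≤ Real.log (t s) ^ 2 / t s := by gcongr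
        have hgoal : -(2 * Real.log (t s) ^ 2 / t s)
            ≤ q + Real.log (1 - p s) * t s := by
          have h8 : 2 * Real.log (t s) ^ 2 / t s = 2 * (Real.log (t s) ^ 2 / t s) := by
            ring
          rw [h8]
          linarith
        rw [hqdef] at hgoal
        linarith
  have hbnd : Tendsto (fun s : ℝ => 2 * Real.log s ^ (1 - 2*α)) atTop (nhds 0) := by
    have h1 : Tendsto (fun x : ℝ => x ^ ((1:ℝ) - 2*α)) atTop (nhds 0) := by
      have := tendsto_rpow_neg_atTop (show (0:ℝ) < 2*α - 1 by linarith)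
      simpa [show -(2*α - 1) = (1:ℝ) - 2*α by ring] using this
    have := (h1.comp Real.tendsto_log_atTop).const_mul (2:ℝ)
    simpa using this
  refine ⟨?_, ?_, ?_⟩
  · have hev1 : ∀ᶠ s : ℝ in atTop, 2 * Real.log s ^ (1 - 2*α) < 1 :=
      hbnd.eventually_lt_const (by norm_num)
    filter_upwards [key, hev1] with s hs h1
    exact ⟨hs.1.1, le_trans hs.1.2 h1.le⟩
  · exact tendsto_of_tendsto_of_tendsto_of_le_of_le' tendsto_const_nhds hbnd
      (key.mono fun s h => h.1.1) (key.mono fun s h => h.1.2)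
  · have hlowten : Tendsto (fun s : ℝ => -(2 * Real.log (t s) ^ 2 / t s)) atTop (nhds 0) := by
      have h0 : Tendsto (fun x : ℝ => Real.log x ^ 2 / x) atTop (nhds 0) := by
        have := Real.tendsto_pow_log_div_mul_add_atTop 1 0 2 one_ne_zero
        simpa using this
      have h1 := (h0.comp htt).const_mul (2:ℝ)
      have h2 := h1.neg
      simpa [mul_div_assoc] using h2
    have hE : Tendsto (fun s : ℝ => Real.log (t s) + Real.log (1 - p s) * t s
        - α * Real.log (Real.log s)) atTop (nhds 0) :=
      tendsto_of_tendsto_of_tendsto_of_le_of_le' hlowten tendsto_const_nhds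
        (key.mono fun s h => h.2.2.2) (key.mono fun s h => h.2.2.1)
    have hexp : Tendsto (fun s : ℝ => Real.exp (Real.log (t s)
        + Real.log (1 - p s) * t s - α * Real.log (Real.log s))) atTop (nhds 1) := by
      have := (Real.continuous_exp.tendsto 0).comp hE
      simpa [Function.comp_def] using this
    exact hexp.congr' (key.mono fun s h => h.2.1.symm)
end
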